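/- arXiv:2605.11842 — 10 statements merged into one kernel-verified Lean document; each statement's English description precedes it below -/
import Mathlib

section
/- For every z in Σ, the point W_L(z) again belongs to Σ, i.e., 0 < Re(W_L(z)) ≤ 1/2, Im(W_L(z)) > 0 and |W_L(z) − 1| ≤ 1. -/
open Complex ComplexConjugate

/-- The Perdomo–Plaza normalized shape space of triangles. -/
def ShapeSpace : Set ℂ :=
  {z : ℂ | 0 < z.re ∧ z.re ≤ 1/2 ∧ 0 < z.im ∧ ‖z - 1‖ ≤ 1}

/-- The left LEAB map. -/
noncomputable def WL (z : ℂ) : ℂ :=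
  if z.re ≤ z.im then (z + conj z) / (2 * conj z) else (z - conj z) / (2 * z)

/-- The right LEAB map. -/
noncomputable def WR (z : ℂ) : ℂ :=
  if 1 - z.re ≤ z.im then (z + conj z - 2) / (2 * (z - 1))
  else (conj z - z) / (2 * (conj z - 1))

theorem WL_maps_into_shape_space (z : ℂ) (hz : z ∈ ShapeSpace) :
    0 < (WL z).re ∧ (WL z).re ≤ 1/2 ∧ 0 < (WL z).im ∧ ‖WL z - 1‖ ≤ 1 := by
  obtain ⟨hx, hx2, hy, _⟩ := hz
  set x := z.re with hxdef
  set y := z.im with hydef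
  have hz0 : z ≠ 0 := by
    intro h; rw [hxdef, h] at hx; simp at hx
  have habs : 0 < ‖z‖ := norm_pos_iff.mpr hz0
  have hd : 0 < x ^ 2 + y ^ 2 := by positivity
  unfold WL
  split_ifs with h
  · -- WL = (z + conj z)/(2 * conj z)
    have hre : ((z + conj z) / (2 * conj z)).re = (x * x) / (x ^ 2 + y ^ 2) := by
      rw [Complex.div_re]
      simp [Complex.normSq_apply, ← hxdef, ← hydef]
      field_simp
      ring
    have him : ((z + conj z) / (2 * conj z)).im = (x * y) / (x ^ 2 + y ^ 2) := by
      rw [Complex.div_im]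
      simp [Complex.normSq_apply, ← hxdef, ← hydef]
      field_simp
      ring
    refine ⟨by rw [hre]; positivity, ?_, by rw [him]; positivity, ?_⟩
    · rw [hre, div_le_iff₀ hd]
      nlinarith
    · have heq : (z + conj z) / (2 * conj z) - 1 = (z - conj z) / (2 * conj z) := by
        have hc : conj z ≠ 0 := by simpa using hz0
        field_simp
        ring
      rw [heq, norm_div]
      have hden : ‖2 * conj z‖ = 2 * ‖z‖ := by
        simp
      rw [hden, div_le_one (by positivity)]
      calc ‖z - conj z‖ = 2 * |y| := by
            rw [Complex.sub_conj]
            simp [abs_mul, ← hydef]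
        _ ≤ 2 * ‖z‖ := by
            have := Complex.abs_im_le_norm z
            rw [← hydef] at this
            linarith
  · -- WL = (z - conj z)/(2 * z)
    have hre : ((z - conj z) / (2 * z)).re = (y * y) / (x ^ 2 + y ^ 2) := by
      rw [Complex.div_re]
      simp [Complex.normSq_apply, ← hxdef, ← hydef]
      field_simp
      ring
    have him : ((z - conj z) / (2 * z)).im = (x * y) / (x ^ 2 + y ^ 2) := by
      rw [Complex.div_im]
      simp [Complex.normSq_apply, ← hxdef, ← hydef]
      field_simp
      ring
    refine ⟨by rw [hre]; positivity, ?_, by rw [him]; positivity, ?_⟩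
    · rw [hre, div_le_iff₀ hd]
      nlinarith
    · have heq : (z - conj z) / (2 * z) - 1 = (-(z + conj z)) / (2 * z) := by
        field_simp
        ring
      rw [heq, norm_div, norm_neg]
      have hden : ‖2 * z‖ = 2 * ‖z‖ := by
        simp
      rw [hden, div_le_one (by positivity)]
      calc ‖z + conj z‖ = 2 * |x| := by
            rw [Complex.add_conj]
            push_cast
            simp [abs_mul, ← hxdef]
        _ ≤ 2 * ‖z‖ := by
            have := Complex.abs_re_le_norm z
            rw [← hxdef] at this
            linarith
end

section
/- For every z in Σ, the point W_R(z) satisfies |W_R(z) − 1/2| = 1/2, i.e., the right LEAB child of every normalized triangle is a right triangle. -/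
open Complex ComplexConjugate

theorem WR_maps_to_geodesic (z : ℂ) (hz : z ∈ ShapeSpace) :
    ‖WR z - 1/2‖ = 1/2 := by
  obtain ⟨hre, -, him, -⟩ := hz
  have hz1 : z - 1 ≠ 0 := by
    intro h
    have : z = 1 := by linear_combination h
    rw [this] at him; simp at him
  have hcz1 : conj z - 1 ≠ 0 := by
    intro h
    have : conj z = 1 := by linear_combination h
    have := congrArg Complex.im this
    simp at this; linarith
  have habs : ‖conj z - 1‖ = ‖z - 1‖ := by
    rw [show conj z - 1 = conj (z - 1) by simp, Complex.norm_conj]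
  unfold WR
  split_ifs with h
  · have : (z + conj z - 2) / (2 * (z - 1)) - 1 / 2 = (conj z - 1) / (2 * (z - 1)) := by
      field_simp; ring
    have ha : ‖z - 1‖ ≠ 0 := norm_ne_zero_iff.mpr hz1
    rw [this, norm_div, habs, norm_mul, Complex.norm_two]
    field_simp
  · have : (conj z - z) / (2 * (conj z - 1)) - 1 / 2 = (1 - z) / (2 * (conj z - 1)) := by
      field_simp; ring
    have h1z : ‖1 - z‖ = ‖conj z - 1‖ := by
      rw [habs, show (1:ℂ) - z = -(z - 1) by ring, norm_neg]
    have ha : ‖z - 1‖ ≠ 0 := norm_ne_zero_iff.mpr hz1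
    rw [this, norm_div, norm_mul, h1z, habs, Complex.norm_two]
    field_simp
end

section
/- For every z in Σ, the point W_R(z) again belongs to Σ, i.e., 0 < Re(W_R(z)) ≤ 1/2, Im(W_R(z)) > 0 and |W_R(z) − 1| ≤ 1. -/
open Complex ComplexConjugate

theorem WR_maps_into_shape_space (z : ℂ) (hz : z ∈ ShapeSpace) :
    0 < (WR z).re ∧ (WR z).re ≤ 1/2 ∧ 0 < (WR z).im ∧ ‖WR z - 1‖ ≤ 1 := by
  obtain ⟨h1, h2, h3, h4⟩ := hz
  set x := z.re with hx
  set y := z.im with hy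
  have h4' : (x-1)^2 + y^2 ≤ 1 := by
    have hsq := Complex.sq_norm (z - 1)
    have hn : Complex.normSq (z-1) = (x-1)^2 + y^2 := by
      simp [Complex.normSq_apply, ← hx, ← hy]; ring
    nlinarith [norm_nonneg (z-1)]
  have hpos : 0 < (x-1)^2 + y^2 := by nlinarith
  have habs : ∀ w : ℂ, Complex.normSq w ≤ 1 → ‖w‖ ≤ 1 := by
    intro w hw
    have := Complex.sq_norm w
    nlinarith [norm_nonneg w]
  have hz1 : z - 1 ≠ 0 := by
    intro hcon
    have : y = 0 := by rw [hy]; rw [sub_eq_zero] at hcon; rw [hcon]; simp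
    linarith
  have hz2 : conj z - 1 ≠ 0 := by
    intro hcon
    have : -y = 0 := by
      rw [sub_eq_zero] at hcon
      have := congrArg Complex.im hcon
      simpa [← hy] using this
    linarith
  unfold WR
  split_ifs with h
  · rw [← hx, ← hy] at h
    have hd2 : (2 : ℂ) * (z - 1) ≠ 0 := by simp [hz1]
    refine ⟨?_, ?_, ?_, ?_⟩
    · simp only [Complex.div_re, Complex.normSq_apply, Complex.add_re, Complex.add_im,
        Complex.sub_re, Complex.sub_im, Complex.mul_re, Complex.mul_im, Complex.conj_re,
        Complex.conj_im, Complex.one_re, Complex.one_im, Complex.re_ofNat, Complex.im_ofNat,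
        ← hx, ← hy, ← add_div]
      apply div_pos <;> nlinarith
    · simp only [Complex.div_re, Complex.normSq_apply, Complex.add_re, Complex.add_im,
        Complex.sub_re, Complex.sub_im, Complex.mul_re, Complex.mul_im, Complex.conj_re,
        Complex.conj_im, Complex.one_re, Complex.one_im, Complex.re_ofNat, Complex.im_ofNat,
        ← hx, ← hy, ← add_div]
      rw [div_le_iff₀ (by nlinarith)]
      nlinarith
    · simp only [Complex.div_im, Complex.normSq_apply, Complex.add_re, Complex.add_im,
        Complex.sub_re, Complex.sub_im, Complex.mul_re, Complex.mul_im, Complex.conj_re,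
        Complex.conj_im, Complex.one_re, Complex.one_im, Complex.re_ofNat, Complex.im_ofNat,
        ← hx, ← hy, div_sub_div_same]
      apply div_pos <;> nlinarith
    · apply habs
      have heq : (z + conj z - 2) / (2 * (z - 1)) - 1
          = (conj z - z) / (2 * (z - 1)) := by
        field_simp
        ring
      rw [heq, map_div₀]
      rw [div_le_one (Complex.normSq_pos.mpr hd2)]
      simp only [Complex.normSq_apply, Complex.sub_re, Complex.sub_im, Complex.mul_re,
        Complex.mul_im, Complex.conj_re, Complex.conj_im, Complex.one_re, Complex.one_im,
        Complex.re_ofNat, Complex.im_ofNat, ← hx, ← hy]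
      nlinarith
  · rw [← hx, ← hy] at h
    push_neg at h
    have hd2 : (2 : ℂ) * (conj z - 1) ≠ 0 := by simp [hz2]
    refine ⟨?_, ?_, ?_, ?_⟩
    · simp only [Complex.div_re, Complex.normSq_apply, Complex.add_re, Complex.add_im,
        Complex.sub_re, Complex.sub_im, Complex.mul_re, Complex.mul_im, Complex.conj_re,
        Complex.conj_im, Complex.one_re, Complex.one_im, Complex.re_ofNat, Complex.im_ofNat,
        ← hx, ← hy, ← add_div]
      apply div_pos <;> nlinarith
    · simp only [Complex.div_re, Complex.normSq_apply, Complex.add_re, Complex.add_im,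
        Complex.sub_re, Complex.sub_im, Complex.mul_re, Complex.mul_im, Complex.conj_re,
        Complex.conj_im, Complex.one_re, Complex.one_im, Complex.re_ofNat, Complex.im_ofNat,
        ← hx, ← hy, ← add_div]
      rw [div_le_iff₀ (by nlinarith)]
      nlinarith
    · simp only [Complex.div_im, Complex.normSq_apply, Complex.add_re, Complex.add_im,
        Complex.sub_re, Complex.sub_im, Complex.mul_re, Complex.mul_im, Complex.conj_re,
        Complex.conj_im, Complex.one_re, Complex.one_im, Complex.re_ofNat, Complex.im_ofNat,
        ← hx, ← hy, div_sub_div_same]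
      apply div_pos <;> nlinarith
    · apply habs
      have heq : (conj z - z) / (2 * (conj z - 1)) - 1
          = (2 - z - conj z) / (2 * (conj z - 1)) := by
        field_simp
        ring
      rw [heq, map_div₀]
      rw [div_le_one (Complex.normSq_pos.mpr hd2)]
      simp only [Complex.normSq_apply, Complex.sub_re, Complex.sub_im, Complex.mul_re,
        Complex.mul_im, Complex.conj_re, Complex.conj_im, Complex.one_re, Complex.one_im,
        Complex.re_ofNat, Complex.im_ofNat, ← hx, ← hy]
      nlinarith
end

section
/- For every z in Σ, the point (z + conj z)/(2·conj z) (the intersection of the ray from 0 through z with the circle |w − 1/2| = 1/2) has real part at most 1/2 if and only if Re z ≤ Im z. Thus the branch condition Re z ≤ Im z of the left LEAB map is exactly the condition under which the ray intersection is already correctly normalized (shortest edge attached to 0). -/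
open Complex ComplexConjugate

theorem left_branch_condition_iff_normalized (z : ℂ) (hz : z ∈ ShapeSpace) :
    ((z + conj z) / (2 * conj z)).re ≤ 1/2 ↔ z.re ≤ z.im := by
  obtain ⟨hx, _, hy, _⟩ := hz
  set x := z.re with hxd
  set y := z.im with hyd
  have hden : x^2 + y^2 > 0 := by positivity
  have hre : ((z + conj z) / (2 * conj z)).re = x^2 / (x^2 + y^2) := by
    rw [Complex.div_re]
    simp [Complex.normSq_apply, ← hxd, ← hyd]
    field_simp
    ring
  rw [hre, div_le_iff₀ hden]
  constructor
  · intro h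
    nlinarith
  · intro h
    nlinarith
end

section
/- For every z in Σ, the point (conj z − z)/(2·(conj z − 1)) (the intersection of the ray from 1 through z with the circle |w − 1/2| = 1/2) has real part at most 1/2 if and only if Im z ≤ 1 − Re z. Thus the branch condition 1 − Re z > Im z of the right LEAB map is exactly the condition under which the ray intersection is already correctly normalized (shortest edge attached to 0). -/
open Complex ComplexConjugate

theorem right_branch_condition_iff_normalized (z : ℂ) (hz : z ∈ ShapeSpace) :
    ((conj z - z) / (2 * (conj z - 1))).re ≤ 1/2 ↔ z.im ≤ 1 - z.re := by
  obtain ⟨hx0, hx, hy, _⟩ := hz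
  have hx1 : z.re < 1 := lt_of_le_of_lt hx (by norm_num)
  have hD : 0 < (z.re - 1)^2 + z.im^2 := by positivity
  have hre : ((conj z - z) / (2 * (conj z - 1))).re
      = z.im^2 / ((z.re - 1)^2 + z.im^2) := by
    rw [Complex.div_re]
    simp [Complex.normSq_apply, Complex.mul_re, Complex.mul_im]
    have hD4 : 2*(z.re-1)*(2*(z.re-1)) + 2*z.im*(2*z.im) ≠ 0 := by nlinarith
    rw [div_eq_div_iff hD4 hD.ne']
    ring
  rw [hre, div_le_iff₀ hD]
  constructor
  · intro h
    nlinarith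
  · intro h
    nlinarith
end

section
/- Let z ∈ Σ with Re z > Im z. Then the reflected point 1 − conj(W_L(z)) = 1 − conj((z − conj z)/(2z)) lies on the open ray issued from 0 through z; that is, there exists a real t > 0 with 1 − conj(W_L(z)) = t·z (explicitly t = Re z/|z|²). Hence the normalized left LEAB child is the ray–geodesic intersection up to the normalization symmetry w ↦ 1 − conj w. -/
open Complex ComplexConjugate

theorem WL_on_ray_second_branch (z : ℂ) (hz : z ∈ ShapeSpace) (h : z.im < z.re) :
    ∃ t : ℝ, 0 < t ∧ 1 - conj (WL z) = (t : ℂ) * z ∧ t = z.re / ‖z‖ ^ 2 := by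
  obtain ⟨hre, _, him, _⟩ := hz
  have hz0 : z ≠ 0 := by
    intro h0; rw [h0] at hre; simp at hre
  have habs : (0:ℝ) < ‖z‖ := norm_pos_iff.mpr hz0
  refine ⟨z.re / ‖z‖ ^ 2, div_pos hre (pow_pos habs 2), ?_, rfl⟩
  have hc0 : (conj z : ℂ) ≠ 0 := by simpa using hz0
  rw [WL, if_neg (not_le.mpr h)]
  have key : ((‖z‖ : ℝ) : ℂ) ^ 2 = z * conj z := by
    norm_cast; rw [Complex.sq_norm, Complex.mul_conj]
  have hre' : ((z.re : ℝ) : ℂ) * 2 = z + conj z := by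
    push_cast [Complex.add_conj]; ring
  push_cast
  rw [map_div₀, map_sub, map_mul]
  simp only [Complex.conj_conj, map_ofNat]
  have hab0 : ((‖z‖ : ℝ) : ℂ) ≠ 0 := by exact_mod_cast habs.ne'
  field_simp
  linear_combination (z + conj z) * key - z * conj z * hre'
end

section
/- Let z ∈ Σ with 1 − Re z ≤ Im z. Then the reflected point 1 − conj(W_R(z)) = 1 − conj((z + conj z − 2)/(2·(z − 1))) lies on the open ray issued from 1 through z; that is, there exists a real t > 0 with 1 − conj(W_R(z)) = 1 + t·(z − 1) (explicitly t = (1 − Re z)/|z − 1|²). Hence the normalized right LEAB child is the ray–geodesic intersection up to the normalization symmetry w ↦ 1 − conj w. -/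
open Complex ComplexConjugate

theorem WR_on_ray_first_branch (z : ℂ) (hz : z ∈ ShapeSpace) (h : 1 - z.re ≤ z.im) :
    ∃ t : ℝ, 0 < t ∧ 1 - conj (WR z) = 1 + (t : ℂ) * (z - 1) ∧
      t = (1 - z.re) / ‖z - 1‖ ^ 2 := by
  obtain ⟨h1, h2, h3, h4⟩ := hz
  have hz1 : z - 1 ≠ 0 := by
    intro hc
    have hz' : z = 1 := by linear_combination hc
    rw [hz'] at h3; simp at h3
  have habs : ‖z - 1‖ ≠ 0 := fun hc => hz1 (norm_eq_zero.mp hc)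
  have hc1 : conj z - 1 ≠ 0 := by
    intro hc
    apply hz1
    have := congrArg conj hc
    simpa using this
  have key : ((‖z - 1‖ : ℂ)) ^ 2 = (z - 1) * (conj z - 1) := by
    have h5 : ((‖z - 1‖ : ℂ)) ^ 2 = ((Complex.normSq (z - 1) : ℝ) : ℂ) := by
      norm_cast
      exact Complex.sq_norm _
    rw [h5, ← Complex.mul_conj]
    simp [map_sub]
  have hre : (z.re : ℂ) = (z + conj z) / 2 := by
    rw [Complex.add_conj]; push_cast; ring
  refine ⟨(1 - z.re) / ‖z - 1‖ ^ 2, ?_, ?_, rfl⟩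
  · apply div_pos (by linarith) (by positivity)
  · rw [WR, if_pos h]
    simp only [map_div₀, map_sub, map_add, map_mul, map_ofNat, map_one, Complex.conj_conj]
    push_cast
    rw [hre, key]
    field_simp
    ring
end

section
/- Every point of the right-triangle geodesic is a fixed point of the LEAB refinement: for every z ∈ Σ with |z − 1/2| = 1/2, one has W_L(z) = z and W_R(z) = z. -/
open Complex ComplexConjugate

theorem geodesic_points_are_fixed (z : ℂ) (hz : z ∈ ShapeSpace)
    (hgeo : ‖z - 1/2‖ = 1/2) :
    WL z = z ∧ WR z = z := by
  obtain ⟨hre, hre2, him, _⟩ := hz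
  have key : z.re ^ 2 + z.im ^ 2 = z.re := by
    have h := congrArg (· ^ 2) hgeo
    replace h : ‖z - 1/2‖ ^ 2 = (1/2 : ℝ) ^ 2 := h
    rw [Complex.sq_norm, Complex.normSq_apply] at h
    simp at h
    nlinarith [h]
  have hz0 : z ≠ 0 := fun h => by simp [h] at hre
  have hc0 : (2 : ℂ) * conj z ≠ 0 := by
    simp [hz0]
  have hle : z.re ≤ z.im := by nlinarith
  constructor
  · rw [WL, if_pos hle, div_eq_iff hc0, Complex.ext_iff]
    simp [Complex.mul_re, Complex.mul_im]
    constructor <;> nlinarith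
  · rw [WR]
    by_cases h : 1 - z.re ≤ z.im
    · have hx : z.re = 1/2 := by nlinarith
      have hy : z.im = 1/2 := by nlinarith
      have hd : (2 : ℂ) * (z - 1) ≠ 0 := by
        refine mul_ne_zero two_ne_zero (sub_ne_zero.mpr ?_)
        intro h1; rw [h1] at him; simp at him
      rw [if_pos h, div_eq_iff hd, Complex.ext_iff]
      simp [Complex.mul_re, Complex.mul_im]
      constructor <;> nlinarith
    · have hd : (2 : ℂ) * (conj z - 1) ≠ 0 := by
        intro hcon
        have h1 : ((2 : ℂ) * (conj z - 1)).im = 0 := by rw [hcon]; simp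
        simp [Complex.mul_im] at h1
        linarith
      rw [if_neg h, div_eq_iff hd, Complex.ext_iff]
      simp [Complex.mul_re, Complex.mul_im]
      constructor <;> nlinarith
end

section
/- The LEAB shape dynamics collapses Σ onto the right-triangle geodesic in a single step and is then stationary: for every z ∈ Σ, one has W_L(W_L(z)) = W_L(z), W_R(W_L(z)) = W_L(z), W_L(W_R(z)) = W_R(z) and W_R(W_R(z)) = W_R(z). -/
open Complex ComplexConjugate

/-- Points on the right-triangle geodesic (within the strip) are fixed by both maps. -/
lemma leab_fixed (w : ℂ) (h1 : 0 < w.re) (h2 : w.re ≤ 1/2) (h3 : 0 < w.im)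
    (h4 : w.re^2 + w.im^2 = w.re) : WL w = w ∧ WR w = w := by
  constructor
  · have hcond : w.re ≤ w.im := by nlinarith
    have hne : (2:ℂ) * conj w ≠ 0 := by
      intro h
      have := congrArg Complex.re h
      simp at this
      linarith
    rw [WL, if_pos hcond, div_eq_iff hne, Complex.ext_iff]
    simp [Complex.mul_re, Complex.mul_im]
    constructor <;> nlinarith
  · by_cases hc : 1 - w.re ≤ w.im
    · have hre : w.re = 1/2 := by nlinarith
      have him : w.im = 1/2 := by nlinarith
      have hne : (2:ℂ) * (w - 1) ≠ 0 := by
        intro h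
        have := congrArg Complex.re h
        simp at this
        linarith
      rw [WR, if_pos hc, div_eq_iff hne, Complex.ext_iff]
      simp [Complex.mul_re, Complex.mul_im]
      constructor <;> nlinarith
    · have hne : (2:ℂ) * (conj w - 1) ≠ 0 := by
        intro h
        have := congrArg Complex.re h
        simp at this
        linarith
      rw [WR, if_neg hc, div_eq_iff hne, Complex.ext_iff]
      simp [Complex.mul_re, Complex.mul_im]
      constructor <;> nlinarith

/-- The left LEAB map sends the (open) upper-right quadrant onto the geodesic. -/
lemma WL_gamma (z : ℂ) (hx : 0 < z.re) (hy : 0 < z.im) :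
    0 < (WL z).re ∧ (WL z).re ≤ 1/2 ∧ 0 < (WL z).im ∧
      (WL z).re^2 + (WL z).im^2 = (WL z).re := by
  rw [WL]
  split_ifs with h
  · simp [Complex.div_re, Complex.div_im, Complex.normSq_apply]
    have hD : (0:ℝ) < 2*z.re*(2*z.re)+2*z.im*(2*z.im) := by nlinarith
    have hD' := hD.ne'
    refine ⟨div_pos (by nlinarith) hD, (div_le_iff₀ hD).mpr (by nlinarith),
      div_neg_of_neg_of_pos (by nlinarith) hD, by field_simp; ring⟩
  · push_neg at h
    simp [Complex.div_re, Complex.div_im, Complex.normSq_apply]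
    have hD : (0:ℝ) < 2*z.re*(2*z.re)+2*z.im*(2*z.im) := by nlinarith
    have hD' := hD.ne'
    refine ⟨div_pos (by nlinarith) hD, (div_le_iff₀ hD).mpr (by nlinarith),
      div_pos (by nlinarith) hD, by field_simp; ring⟩

/-- The right LEAB map sends the strip onto the geodesic. -/
lemma WR_gamma (z : ℂ) (hx : 0 < z.re) (hx2 : z.re ≤ 1/2) (hy : 0 < z.im) :
    0 < (WR z).re ∧ (WR z).re ≤ 1/2 ∧ 0 < (WR z).im ∧
      (WR z).re^2 + (WR z).im^2 = (WR z).re := by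
  rw [WR]
  split_ifs with h
  · simp [Complex.div_re, Complex.div_im, Complex.normSq_apply]
    have hD : (0:ℝ) < 2*(z.re-1)*(2*(z.re-1))+2*z.im*(2*z.im) := by nlinarith
    have hD' := hD.ne'
    refine ⟨div_pos (by nlinarith) hD, (div_le_iff₀ hD).mpr (by nlinarith),
      div_neg_of_neg_of_pos (by nlinarith) hD, by field_simp; ring⟩
  · push_neg at h
    simp [Complex.div_re, Complex.div_im, Complex.normSq_apply]
    have hD : (0:ℝ) < 2*(z.re-1)*(2*(z.re-1))+2*z.im*(2*z.im) := by nlinarith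
    have hD' := hD.ne'
    refine ⟨div_pos (by nlinarith) hD, (div_le_iff₀ hD).mpr (by nlinarith),
      div_pos (by nlinarith) hD, by field_simp; ring⟩

theorem leab_collapse_in_one_step (z : ℂ) (hz : z ∈ ShapeSpace) :
    WL (WL z) = WL z ∧ WR (WL z) = WL z ∧ WL (WR z) = WR z ∧ WR (WR z) = WR z := by
  obtain ⟨hx, hx2, hy, -⟩ := hz
  obtain ⟨a1, a2, a3, a4⟩ := WL_gamma z hx hy
  obtain ⟨b1, b2, b3, b4⟩ := WR_gamma z hx hx2 hy
  obtain ⟨l1, l2⟩ := leab_fixed (WL z) a1 a2 a3 a4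
  obtain ⟨r1, r2⟩ := leab_fixed (WR z) b1 b2 b3 b4
  exact ⟨l1, l2, r1, r2⟩
end

section
/- Let α, β, γ be positive real numbers with α + β + γ = π, γ ≥ α and γ ≥ β (the interior angles of a triangle whose largest angle γ is opposite the longest edge). Then π/2 − α > 0, π/2 − β > 0, π/2 − α ≥ β/2, π/2 − β ≥ α/2, and consequently min(α, β, π/2 − α, π/2 − β) ≥ (1/2)·min(α, β, γ). In other words, after one LEAB step (whose two children have angle triples {α, π/2, π/2 − α} and {β, π/2, π/2 − β}), the minimal interior angle is at least half the minimal interior angle of the parent triangle. -/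
open Real

theorem leab_min_angle_bound (α β γ : ℝ) (hα : 0 < α) (hβ : 0 < β) (hγ : 0 < γ)
    (hsum : α + β + γ = π) (hγα : α ≤ γ) (hγβ : β ≤ γ) :
    0 < π/2 - α ∧ 0 < π/2 - β ∧ β/2 ≤ π/2 - α ∧ α/2 ≤ π/2 - β ∧
      (1/2) * min α (min β γ) ≤ min (min α β) (min (π/2 - α) (π/2 - β)) := by
  have h1 : 0 < π/2 - α := by linarith
  have h2 : 0 < π/2 - β := by linarith
  have h3 : β/2 ≤ π/2 - α := by linarith
  have h4 : α/2 ≤ π/2 - β := by linarith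
  refine ⟨h1, h2, h3, h4, ?_⟩
  have hm : min α (min β γ) ≤ α := min_le_left _ _
  have hm2 : min α (min β γ) ≤ β := le_trans (min_le_right _ _) (min_le_left _ _)
  simp only [le_min_iff]
  refine ⟨⟨by linarith, by linarith⟩, by linarith, by linarith⟩
end
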